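/- arXiv:2301.13800 — 2 statements merged into one kernel-verified Lean document; each statement's English description precedes it below -/
import Mathlib

section
/- For all positive integers n, m, r with n ≥ m·r + 1, we have S(n, m, ≥r) ≤ (m^(m·r+1) / m!) · S(n−1, m, ≥r). -/
/-- The `r`-associated Stirling number: the number of partitions of `{1,...,n}`
(modelled as `Fin n`) into exactly `m` blocks, each of size at least `r`. -/
noncomputable def stirlingGe (n m r : ℕ) : ℕ :=
  Set.ncard {P : Finset (Finset (Fin n)) |
    P.card = m ∧ (∀ b ∈ P, r ≤ b.card) ∧ ∀ x : Fin n, ∃! b, b ∈ P ∧ x ∈ b}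

/-!
Both bounds come from colourings of the points with `m` colours. A partition into `m` blocks
together with a labelling of its blocks by `Fin m` is recovered from the colouring whose colour
classes are the blocks, so `S(n, m, ≥r) · m! ≤ m ^ n`. Conversely, fix `m` disjoint `r`-sets
among `N` points, the `i`-th one coloured `i`: extending this by any colouring of the remaining
`N - m r` points gives colour classes of size at least `r`, and different extensions give
different partitions, so `m ^ (N - m r) ≤ S(N, m, ≥r)`. For `N = n - 1`, the identity
`m ^ n = m ^ (m r + 1) · m ^ (n - 1 - m r)` combines the two bounds.
-/

open Finset Nat

namespace StirlingGe

variable {α ι : Type*}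

def partitions (α : Type*) (m r : ℕ) : Set (Finset (Finset α)) :=
  {P | P.card = m ∧ (∀ b ∈ P, r ≤ b.card) ∧ ∀ x : α, ∃! b, b ∈ P ∧ x ∈ b}

theorem stirlingGe_eq_ncard (n m r : ℕ) : stirlingGe n m r = (partitions (Fin n) m r).ncard :=
  rfl

section Fiber

variable [Fintype α] [DecidableEq ι]

def fiber (c : α → ι) (i : ι) : Finset α := {x | c x = i}

@[simp]
theorem mem_fiber {c : α → ι} {i : ι} {x : α} : x ∈ fiber c i ↔ c x = i := by
  simp [fiber]

theorem image_fiber_mem_partitions [DecidableEq α] [Fintype ι] {r : ℕ} (hr : 0 < r) (c : α → ι)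
    (hc : ∀ i, r ≤ #(fiber c i)) : univ.image (fiber c) ∈ partitions α (Fintype.card ι) r := by
  have hinj : Function.Injective (fiber c) := fun i j hij => by
    obtain ⟨x, hx⟩ := card_pos.mp (hr.trans_le (hc i))
    have hx' := hij ▸ hx
    rw [mem_fiber] at hx hx'
    rw [← hx, hx']
  refine ⟨by rw [card_image_of_injective _ hinj, Finset.card_univ], ?_, fun x => ?_⟩
  · simpa using hc
  · refine ⟨fiber c (c x), ⟨mem_image_of_mem _ (mem_univ _), mem_fiber.mpr rfl⟩, ?_⟩
    rintro b ⟨hb, hxb⟩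
    obtain ⟨i, -, rfl⟩ := mem_image.mp hb
    rw [mem_fiber.mp hxb]

theorem eq_of_image_fiber_eq [DecidableEq α] [Fintype ι] {c c' : α → ι}
    (h : univ.image (fiber c) = univ.image (fiber c'))
    (hagree : ∀ i, ∃ a, c a = i ∧ c' a = i) : c = c' := by
  funext x
  obtain ⟨j, -, hj⟩ := mem_image.mp (h ▸ mem_image_of_mem (fiber c) (mem_univ (c x)))
  obtain ⟨a, hca, hc'a⟩ := hagree j
  have ha : a ∈ fiber c (c x) := hj ▸ mem_fiber.mpr hc'a
  have hx : x ∈ fiber c' j := hj ▸ mem_fiber.mpr rfl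
  rw [mem_fiber] at ha hx
  rw [hx, ← hca, ha]

end Fiber

section Color

variable [DecidableEq α] (P : Finset (Finset α)) (hP : ∀ x : α, ∃! b, b ∈ P ∧ x ∈ b)

noncomputable def blockOf (x : α) : {b // b ∈ P} :=
  ⟨P.choose (x ∈ ·) (hP x), P.choose_mem _ (hP x)⟩

theorem blockOf_eq_iff {x : α} {b : {b // b ∈ P}} : blockOf P hP x = b ↔ x ∈ (b : Finset α) :=
  ⟨fun h => h ▸ P.choose_property _ (hP x), fun hx =>
    Subtype.ext ((hP x).unique ⟨(blockOf P hP x).2, P.choose_property _ (hP x)⟩ ⟨b.2, hx⟩)⟩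

noncomputable def color (e : {b // b ∈ P} ≃ ι) (x : α) : ι :=
  e (blockOf P hP x)

variable [Fintype α] [DecidableEq ι]

theorem fiber_color (e : {b // b ∈ P} ≃ ι) (i : ι) : fiber (color P hP e) i = e.symm i := by
  ext x
  rw [mem_fiber, color, ← Equiv.eq_symm_apply, blockOf_eq_iff]

theorem image_fiber_color [Fintype ι] (e : {b // b ∈ P} ≃ ι) :
    univ.image (fiber (color P hP e)) = P := by
  ext b
  simp only [fiber_color, mem_image, mem_univ, true_and]
  exact ⟨fun ⟨i, hi⟩ => hi ▸ (e.symm i).2, fun hb => ⟨e ⟨b, hb⟩, by simp⟩⟩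

end Color

theorem ncard_partitions_mul_factorial_le [Fintype α] [DecidableEq α] (m r : ℕ) :
    (partitions α m r).ncard * m ! ≤ m ^ Fintype.card α := by
  let F : partitions α m r × Equiv.Perm (Fin m) → α → Fin m := fun z =>
    color z.1.1 z.1.2.2.2 ((z.1.1.equivFinOfCardEq z.1.2.1).trans z.2)
  have hF : F.Injective := by
    rintro ⟨⟨P, hPc, _, hP⟩, σ⟩ ⟨⟨Q, hQc, _, hQ⟩, τ⟩ h
    obtain rfl : P = Q := by
      rw [← image_fiber_color P hP ((P.equivFinOfCardEq hPc).trans σ),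
        ← image_fiber_color Q hQ ((Q.equivFinOfCardEq hQc).trans τ)]
      exact congrArg (fun c => univ.image (fiber c)) h
    have he : (P.equivFinOfCardEq hPc).trans σ = (P.equivFinOfCardEq hQc).trans τ :=
      Equiv.symm_bijective.injective <| Equiv.ext fun i => Subtype.ext <| by
        rw [← fiber_color P hP, ← fiber_color P hQ]
        exact congrArg (fiber · i) h
    obtain rfl : σ = τ :=
      Equiv.ext fun i => by simpa using DFunLike.congr_fun he ((P.equivFinOfCardEq hPc).symm i)
    rfl
  simpa [Nat.card_prod, Nat.card_coe_set_eq, Fintype.card_perm] using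
    Nat.card_le_card_of_injective F hF

theorem pow_le_ncard_partitions [Fintype α] [DecidableEq α] {m r : ℕ} (hr : 0 < r)
    (h : m * r ≤ Fintype.card α) :
    m ^ (Fintype.card α - m * r) ≤ (partitions α m r).ncard := by
  let e : α ≃ Fin m × Fin r ⊕ Fin (Fintype.card α - m * r) :=
    Fintype.equivOfCardEq (by simp; omega)
  let c : (Fin (Fintype.card α - m * r) → Fin m) → α → Fin m := fun g => Sum.elim Prod.fst g ∘ e
  have hc : ∀ g i, r ≤ #(fiber (c g) i) := fun g i => by
    simpa using card_le_card_of_injOn (s := univ) (fun t : Fin r => e.symm (.inl (i, t)))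
      (fun t _ => by simp [c]) (fun s _ t _ hst => by simpa using hst)
  have hmem : ∀ g, univ.image (fiber (c g)) ∈ partitions α m r := fun g => by
    simpa using image_fiber_mem_partitions hr (c g) (hc g)
  have hinj : Function.Injective fun g => (⟨_, hmem g⟩ : partitions α m r) := fun g g' hgg' => by
    have hcc := eq_of_image_fiber_eq (congrArg Subtype.val hgg')
      fun i => ⟨e.symm (.inl (i, ⟨0, hr⟩)), by simp [c], by simp [c]⟩
    funext j
    simpa [c] using congrFun hcc (e.symm (.inr j))
  simpa [Nat.card_coe_set_eq] using Nat.card_le_card_of_injective _ hinj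

end StirlingGe

open StirlingGe in
theorem stmt_1_general (n m r : ℕ) (hr : 0 < r)
    (h : m * r + 1 ≤ n) :
    (stirlingGe n m r : ℝ) ≤
      (m : ℝ) ^ (m * r + 1) / (Nat.factorial m : ℝ) * (stirlingGe (n - 1) m r : ℝ) := by
  have hupper : stirlingGe n m r * m ! ≤ m ^ n := by
    rw [stirlingGe_eq_ncard]
    simpa using ncard_partitions_mul_factorial_le (α := Fin n) m r
  have hlower : m ^ (n - 1 - m * r) ≤ stirlingGe (n - 1) m r := by
    rw [stirlingGe_eq_ncard]
    simpa using pow_le_ncard_partitions (α := Fin (n - 1)) hr (by simp; omega)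
  have key : stirlingGe n m r * m ! ≤ m ^ (m * r + 1) * stirlingGe (n - 1) m r :=
    calc stirlingGe n m r * m ! ≤ m ^ n := hupper
      _ = m ^ (m * r + 1) * m ^ (n - 1 - m * r) := by rw [← pow_add]; congr 1; omega
      _ ≤ m ^ (m * r + 1) * stirlingGe (n - 1) m r := Nat.mul_le_mul_left _ hlower
  rw [div_mul_eq_mul_div, le_div_iff₀ (by positivity)]
  exact_mod_cast key

theorem stmt_1 (n m r : ℕ) (hn : 0 < n) (hm : 0 < m) (hr : 0 < r)
    (h : m * r + 1 ≤ n) :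
    (stirlingGe n m r : ℝ) ≤
      (m : ℝ) ^ (m * r + 1) / (Nat.factorial m : ℝ) * (stirlingGe (n - 1) m r : ℝ) :=
  stmt_1_general n m r hr h
end

section
/- Let t ≥ 2, n ∈ ℤ₊ divisible by t where needed, and d ≥ n/t − c₂√n with c₂ = √(π/(2·t³·(4t)^(1/(t−1)))). Then Σ_{n_1+...+n_t=n, n_i≥d for all i} C(n; n_1,...,n_t) ≤ t^n / 2, i.e., the class of functions attaining every value at least d times contains at most half of all t^n functions. -/
open Finset Real Stirling Filter Nat

lemma aux_sqrt_pi_le {m : ℕ} (hm : m ≠ 0) : Real.sqrt π ≤ stirlingSeq m := by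
  obtain ⟨a, rfl⟩ := Nat.exists_eq_succ_of_ne_zero hm
  have h : Filter.Tendsto (stirlingSeq ∘ Nat.succ) atTop (nhds (Real.sqrt π)) := by
    have := tendsto_stirlingSeq_sqrt_pi.comp (tendsto_add_atTop_nat 1)
    simpa [Function.comp_def, Nat.succ_eq_add_one] using this
  exact stirlingSeq'_antitone.le_of_tendsto h a

lemma aux_stirling_mono {m n : ℕ} (hm : m ≠ 0) (h : m ≤ n) : stirlingSeq n ≤ stirlingSeq m := by
  obtain ⟨a, rfl⟩ := Nat.exists_eq_succ_of_ne_zero hm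
  obtain ⟨b, rfl⟩ := Nat.exists_eq_succ_of_ne_zero (by omega : n ≠ 0)
  exact stirlingSeq'_antitone (by omega : a ≤ b)

lemma aux_fact_eq (m : ℕ) (hm : m ≠ 0) :
    (m ! : ℝ) = stirlingSeq m * (Real.sqrt (2*m) * ((m:ℝ)/Real.exp 1)^m) := by
  have h0 : (0:ℝ) < Real.sqrt (2*m) * ((m:ℝ)/Real.exp 1)^m := by
    have : (0:ℝ) < m := by exact_mod_cast Nat.pos_of_ne_zero hm
    positivity
  rw [stirlingSeq]
  field_simp

lemma aux_stirling_pos (m : ℕ) (hm : m ≠ 0) : 0 < stirlingSeq m :=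
  lt_of_lt_of_le (by positivity) (aux_sqrt_pi_le hm)

lemma aux_analytic (t' k : ℕ) (hk : 1 ≤ k) (u : ℝ) (hu : 0 ≤ u)
    (hu2 : u ≤ 2 * ((t'+2:ℕ):ℝ) *
        Real.sqrt (π / (2 * ((t'+2:ℕ):ℝ) ^ 3 * (4 * ((t'+2:ℕ):ℝ)) ^ (1 / (((t'+2:ℕ):ℝ) - 1))))
        * Real.sqrt (((t'+2) * k : ℕ) : ℝ)) :
    u ^ (t'+1) * (Nat.multinomial univ (fun _ : Fin (t'+2) => k) : ℝ)
      ≤ ((t'+2:ℕ):ℝ) ^ ((t'+2) * k) / 2 := by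
  set t : ℕ := t' + 2 with hts
  set n : ℕ := t * k with hns
  have hT : (0:ℝ) < (t:ℕ) := by positivity
  have hK : (0:ℝ) < (k:ℕ) := by exact_mod_cast hk
  have hN : (0:ℝ) < (n:ℕ) := by
    have : 0 < n := by positivity
    exact_mod_cast this
  have hNcast : ((n:ℕ):ℝ) = ((t:ℕ):ℝ) * ((k:ℕ):ℝ) := by push_cast [hns]; ring
  set A : ℝ := (4 * ((t:ℕ):ℝ)) ^ (1 / (((t:ℕ):ℝ) - 1)) with hAs
  have hApos : 0 < A := Real.rpow_pos_of_pos (by positivity) _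
  have hA : A ^ (t'+1) = 4 * ((t:ℕ):ℝ) := by
    have h4t : (0:ℝ) < 4 * ((t:ℕ):ℝ) := by positivity
    rw [hAs, ← Real.rpow_natCast ((4 * ((t:ℕ):ℝ)) ^ (1 / (((t:ℕ):ℝ) - 1))) (t'+1),
      ← Real.rpow_mul h4t.le]
    have h5 : 1 / (((t:ℕ):ℝ) - 1) * ((t'+1:ℕ):ℝ) = 1 := by
      have h6 : ((t:ℕ):ℝ) - 1 = ((t'+1:ℕ):ℝ) := by push_cast [hts]; ring
      rw [h6]
      have h1 : ((t'+1:ℕ):ℝ) ≠ 0 := by positivity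
      field_simp
    push_cast at h5 ⊢
    rw [h5, Real.rpow_one]
  set c₂ : ℝ := Real.sqrt (π / (2 * ((t:ℕ):ℝ) ^ 3 * A)) with hc₂s
  have hc₂pos : 0 ≤ c₂ := Real.sqrt_nonneg _
  have hc₂sq : c₂ ^ 2 = π / (2 * ((t:ℕ):ℝ) ^ 3 * A) := by
    rw [hc₂s, Real.sq_sqrt]
    positivity
  set γ : ℝ := 2 * ((t:ℕ):ℝ) * c₂ * Real.sqrt ((n:ℕ):ℝ) with hγs
  have hγpos : 0 ≤ γ := by positivity
  have hγsq : γ ^ 2 = 2 * π * ((n:ℕ):ℝ) / (((t:ℕ):ℝ) * A) := by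
    rw [hγs]
    have h7 : (Real.sqrt ((n:ℕ):ℝ)) ^ 2 = ((n:ℕ):ℝ) := Real.sq_sqrt hN.le
    have hAne : A ≠ 0 := ne_of_gt hApos
    have hTne : ((t:ℕ):ℝ) ≠ 0 := ne_of_gt hT
    field_simp [mul_pow, hc₂sq, h7]
    rw [hc₂sq, h7]; field_simp
  -- the key inequality
  have key : γ ^ (t'+1) * Real.sqrt (2*((n:ℕ):ℝ))
      ≤ (Real.sqrt π) ^ (t'+1) * (Real.sqrt (2*((k:ℕ):ℝ))) ^ (t'+2) / 2 := by
    have hL : 0 ≤ γ ^ (t'+1) * Real.sqrt (2*((n:ℕ):ℝ)) := by positivity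
    have hR : (0:ℝ) ≤ (Real.sqrt π) ^ (t'+1) * (Real.sqrt (2*((k:ℕ):ℝ))) ^ (t'+2) / 2 := by
      positivity
    rw [← pow_le_pow_iff_left₀ hL hR (two_ne_zero)]
    have e1 : (γ ^ (t'+1) * Real.sqrt (2*((n:ℕ):ℝ))) ^ 2
        = (γ^2) ^ (t'+1) * (2*((n:ℕ):ℝ)) := by
      rw [mul_pow, ← pow_mul, ← pow_mul', Real.sq_sqrt (by positivity)]
    have e2 : ((Real.sqrt π) ^ (t'+1) * (Real.sqrt (2*((k:ℕ):ℝ))) ^ (t'+2) / 2) ^ 2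
        = π ^ (t'+1) * (2*((k:ℕ):ℝ)) ^ (t'+2) / 4 := by
      rw [div_pow, mul_pow, ← pow_mul, ← pow_mul, pow_mul', pow_mul',
        Real.sq_sqrt Real.pi_pos.le, Real.sq_sqrt (by positivity : (0:ℝ) ≤ 2*((k:ℕ):ℝ))]
      norm_num
    rw [e1, e2, hγsq]
    -- now an equality
    have hAne : A ≠ 0 := ne_of_gt hApos
    have hTne : ((t:ℕ):ℝ) ≠ 0 := ne_of_gt hT
    have hrw : 2 * π * ((n:ℕ):ℝ) / (((t:ℕ):ℝ) * A) = π * (2*((k:ℕ):ℝ)) / A := by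
      rw [hNcast]; field_simp
    rw [hrw, div_pow, mul_pow, hA]
    rw [hNcast]
    apply le_of_eq
    rw [div_mul_eq_mul_div, div_eq_div_iff (by positivity) (by norm_num : (4:ℝ) ≠ 0)]
    rw [pow_succ (2*((k:ℕ):ℝ)) (t'+1)]
    ring
  -- main chain
  have hkne : k ≠ 0 := by omega
  have hnne : n ≠ 0 := by positivity
  have hkn : k ≤ n := by rw [hns]; nlinarith [hk]
  set sk : ℝ := stirlingSeq k with hsks
  set sn : ℝ := stirlingSeq n with hsns
  have hskpos : 0 < sk := aux_stirling_pos k hkne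
  have hsnpos : 0 < sn := aux_stirling_pos n hnne
  have hsnk : sn ≤ sk := aux_stirling_mono hkne hkn
  have hπk : Real.sqrt π ≤ sk := aux_sqrt_pi_le hkne
  set M : ℕ := Nat.multinomial univ (fun _ : Fin (t'+2) => k) with hMs
  have hMspec : ((k ! : ℝ)) ^ (t'+2) * (M:ℝ) = (n ! : ℝ) := by
    have h := Nat.multinomial_spec (univ : Finset (Fin (t'+2))) (fun _ => k)
    simp only [Finset.prod_const, Finset.sum_const, Finset.card_univ, Fintype.card_fin,
      smul_eq_mul] at h
    have : ((k !) ^ (t'+2) * M : ℕ) = ((t'+2) * k).factorial := h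
    have h2 := congrArg (Nat.cast : ℕ → ℝ) this
    push_cast at h2
    rw [← hns] at h2
    exact h2
  have hfk : (0:ℝ) < ((k ! : ℝ)) ^ (t'+2) := by positivity
  have hR : (((n:ℕ):ℝ)/Real.exp 1)^n = ((t:ℕ):ℝ)^n * ((((k:ℕ):ℝ)/Real.exp 1)^k)^(t'+2) := by
    rw [← pow_mul]
    have hkt : k * (t'+2) = n := by rw [hns]; ring
    rw [hkt, ← mul_pow]
    congr 1
    rw [hNcast, mul_div_assoc]
  have hstep : sk * (Real.sqrt π)^(t'+1) ≤ sk^(t'+2) := by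
    have h1 : (Real.sqrt π)^(t'+1) ≤ sk^(t'+1) :=
      pow_le_pow_left₀ (Real.sqrt_nonneg _) hπk _
    calc sk * (Real.sqrt π)^(t'+1) ≤ sk * sk^(t'+1) := by
          exact mul_le_mul_of_nonneg_left h1 hskpos.le
      _ = sk^(t'+2) := by ring
  have H : u^(t'+1) * ((n ! : ℝ)) ≤ ((t:ℕ):ℝ)^n/2 * ((k ! : ℝ))^(t'+2) := by
    calc u^(t'+1) * ((n ! : ℝ))
        ≤ γ^(t'+1) * ((n ! : ℝ)) := by
          have : (0:ℝ) ≤ (n ! : ℝ) := by positivity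
          gcongr
      _ = γ^(t'+1) * (sn * (Real.sqrt (2*((n:ℕ):ℝ)) * (((n:ℕ):ℝ)/Real.exp 1)^n)) := by
          rw [aux_fact_eq n hnne]
      _ ≤ γ^(t'+1) * (sk * (Real.sqrt (2*((n:ℕ):ℝ)) * (((n:ℕ):ℝ)/Real.exp 1)^n)) := by
          gcongr
      _ = sk * (γ^(t'+1) * Real.sqrt (2*((n:ℕ):ℝ))) * ((((n:ℕ):ℝ)/Real.exp 1)^n) := by ring
      _ ≤ sk * ((Real.sqrt π) ^ (t'+1) * (Real.sqrt (2*((k:ℕ):ℝ))) ^ (t'+2) / 2)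
            * ((((n:ℕ):ℝ)/Real.exp 1)^n) := by
          have hp : (0:ℝ) ≤ (((n:ℕ):ℝ)/Real.exp 1)^n := by positivity
          gcongr
      _ = (sk * (Real.sqrt π)^(t'+1)) * (((t:ℕ):ℝ)^n * (Real.sqrt (2*((k:ℕ):ℝ)))^(t'+2)
            * ((((k:ℕ):ℝ)/Real.exp 1)^k)^(t'+2) / 2) := by
          rw [hR]; ring
      _ ≤ (sk^(t'+2)) * (((t:ℕ):ℝ)^n * (Real.sqrt (2*((k:ℕ):ℝ)))^(t'+2)
            * ((((k:ℕ):ℝ)/Real.exp 1)^k)^(t'+2) / 2) := by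
          have : (0:ℝ) ≤ ((t:ℕ):ℝ)^n * (Real.sqrt (2*((k:ℕ):ℝ)))^(t'+2)
            * ((((k:ℕ):ℝ)/Real.exp 1)^k)^(t'+2) / 2 := by positivity
          exact mul_le_mul_of_nonneg_right hstep this
      _ = ((t:ℕ):ℝ)^n/2 * (sk * (Real.sqrt (2*((k:ℕ):ℝ)) * (((k:ℕ):ℝ)/Real.exp 1)^k))^(t'+2) := by
          rw [mul_pow, mul_pow]; ring
      _ = ((t:ℕ):ℝ)^n/2 * ((k ! : ℝ))^(t'+2) := by rw [← aux_fact_eq k hkne]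
  have h2 : (u^(t'+1) * (M:ℝ)) * ((k ! : ℝ))^(t'+2) ≤ (((t:ℕ):ℝ)^n/2) * ((k ! : ℝ))^(t'+2) := by
    calc (u^(t'+1) * (M:ℝ)) * ((k ! : ℝ))^(t'+2)
        = u^(t'+1) * (((k ! : ℝ))^(t'+2) * (M:ℝ)) := by ring
      _ = u^(t'+1) * ((n ! : ℝ)) := by rw [hMspec]
      _ ≤ _ := H
  exact le_of_mul_le_mul_right h2 hfk

lemma aux_jensen {t k : ℕ} (ht : t ≠ 0) (c : Fin t → ℕ) (hc : ∑ i, c i = t * k) :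
    ((k ! : ℝ)) ^ t ≤ ∏ i, ((c i)! : ℝ) := by
  have ht' : (0:ℝ) < t := by exact_mod_cast Nat.pos_of_ne_zero ht
  have hw : ∑ _i : Fin t, (t:ℝ)⁻¹ = 1 := by
    simp [Finset.sum_const, Finset.card_univ]
    field_simp
  have hj := Real.convexOn_log_Gamma.map_sum_le (t := Finset.univ)
      (w := fun _ : Fin t => (t:ℝ)⁻¹) (p := fun i => (c i : ℝ) + 1)
      (fun i _ => by positivity) hw (fun i _ => by
        simp only [Set.mem_Ioi]; positivity)
  have hsum : ∑ i : Fin t, (t:ℝ)⁻¹ • ((c i : ℝ) + 1) = (k:ℝ) + 1 := by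
    rw [← Finset.smul_sum]
    have : ∑ i : Fin t, ((c i : ℝ) + 1) = (t:ℝ) * k + t := by
      rw [Finset.sum_add_distrib]
      simp [Finset.card_univ]
      exact_mod_cast congrArg (Nat.cast : ℕ → ℝ) hc
    rw [this]
    rw [smul_eq_mul, mul_add, ← mul_assoc, inv_mul_cancel₀ (ne_of_gt ht'), one_mul]
  rw [hsum] at hj
  simp only [Function.comp_apply, smul_eq_mul] at hj
  -- rewrite Gamma values as factorials
  rw [Real.Gamma_nat_eq_factorial] at hj
  have hj2 : (t:ℝ) * Real.log (k !) ≤ ∑ i : Fin t, Real.log ((c i)! : ℝ) := by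
    have : ∑ i : Fin t, (t:ℝ)⁻¹ * Real.log (Real.Gamma ((c i:ℝ) + 1))
        = (t:ℝ)⁻¹ * ∑ i : Fin t, Real.log ((c i)! : ℝ) := by
      rw [← Finset.mul_sum]
      congr 1
      refine Finset.sum_congr rfl fun i _ => ?_
      rw [Real.Gamma_nat_eq_factorial]
    rw [this] at hj
    have h3 := mul_le_mul_of_nonneg_left hj (le_of_lt ht')
    rwa [← mul_assoc, mul_inv_cancel₀ (ne_of_gt ht'), one_mul] at h3
  have hlogpow : Real.log ((k ! : ℝ) ^ t) = (t:ℝ) * Real.log (k !) := by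
    rw [Real.log_pow]
  have hlogprod : Real.log (∏ i, ((c i)! : ℝ)) = ∑ i : Fin t, Real.log ((c i)! : ℝ) := by
    rw [Real.log_prod]
    intro i _
    exact_mod_cast (Nat.factorial_pos (c i)).ne'
  have h1 : (0:ℝ) < (k ! : ℝ) ^ t := by positivity
  have h2 : (0:ℝ) < ∏ i, ((c i)! : ℝ) := by
    apply Finset.prod_pos; intro i _; exact_mod_cast Nat.factorial_pos (c i)
  rw [← Real.log_le_log_iff h1 h2, hlogpow, hlogprod]
  exact hj2

lemma aux_class_card (n t : ℕ) (c : Fin t → ℕ) (hc : ∑ i, c i = n) :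
    (univ.filter fun g : Fin n → Fin t =>
        ∀ k, (univ.filter fun x => g x = k).card = c k).card * ∏ i, (c i)! ≤ n ! := by
  classical
  set P : (Fin n → Fin t) → Prop := fun g => ∀ k, (univ.filter fun x => g x = k).card = c k
    with hP
  have hcard : (univ.filter P).card = Fintype.card {g // P g} :=
    (Fintype.card_subtype P).symm
  rw [hcard]
  have hT : Fintype.card (Σ k : Fin t, Fin (c k)) = n := by simp [hc]
  let e₀ : (Σ k : Fin t, Fin (c k)) ≃ Fin n := Fintype.equivFinOfCardEq hT
  let F : {g // P g} → (Σ k : Fin t, Fin (c k)) → Fin n := fun (g : {g // P g}) (p : Σ k : Fin t, Fin (c k)) =>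
    ((univ.filter fun x => g.1 x = p.1).orderIsoOfFin (g.2 p.1) p.2 : Fin n)
  have hFmem : ∀ (g : {g // P g}) (p : Σ k : Fin t, Fin (c k)), g.1 (F g p) = p.1 := by
    intro g p
    have hm := ((univ.filter fun x => g.1 x = p.1).orderIsoOfFin (g.2 p.1) p.2).2
    exact (Finset.mem_filter.mp hm).2
  have hFinj : ∀ g, Function.Injective (F g) := by
    intro g p q h
    have h1 : p.1 = q.1 := by rw [← hFmem g p, ← hFmem g q, h]
    obtain ⟨kp, ip⟩ := p
    obtain ⟨kq, iq⟩ := q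
    dsimp at h1
    subst h1
    have h2 : ((univ.filter fun x => g.1 x = kp).orderIsoOfFin (g.2 kp) ip)
        = ((univ.filter fun x => g.1 x = kp).orderIsoOfFin (g.2 kp) iq) := Subtype.ext h
    have h3 : ip = iq := ((univ.filter fun x => g.1 x = kp).orderIsoOfFin (g.2 kp)).injective h2
    rw [h3]
  have hFbij : ∀ g, Function.Bijective (F g) := fun g =>
    (Fintype.bijective_iff_injective_and_card (F g)).mpr ⟨hFinj g, by simp [hT]⟩
  let Fg : {g // P g} → (Σ k : Fin t, Fin (c k)) ≃ Fin n := fun g =>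
    Equiv.ofBijective (F g) (hFbij g)
  let Φ : ({g // P g} × Π k, Equiv.Perm (Fin (c k))) → Equiv.Perm (Fin n) := fun gσ =>
    (e₀.symm.trans (Equiv.sigmaCongrRight gσ.2)).trans (Fg gσ.1)
  have hval : ∀ (gσ : {g // P g} × Π k, Equiv.Perm (Fin (c k))) (y : Fin n), gσ.1.1 (Φ gσ y) = (e₀.symm y).1 := by
    intro gσ y
    show gσ.1.1 (F gσ.1 (Equiv.sigmaCongrRight gσ.2 (e₀.symm y))) = _
    rw [hFmem]
    rfl
  have hΦinj : Function.Injective Φ := by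
    intro a b hab
    have hg : a.1 = b.1 := by
      apply Subtype.ext
      funext x
      have h1 := hval a ((Φ a).symm x)
      have h2 := hval b ((Φ a).symm x)
      rw [Equiv.apply_symm_apply] at h1
      rw [hab, Equiv.apply_symm_apply] at h2
      rw [h1, h2, hab]
    obtain ⟨ga, σa⟩ := a
    obtain ⟨gb, σb⟩ := b
    dsimp at hg
    subst hg
    simp only [Prod.mk.injEq, true_and]
    have hσ : Equiv.sigmaCongrRight σa = Equiv.sigmaCongrRight σb := by
      have : ∀ p, (Fg ga) ((Equiv.sigmaCongrRight σa) p) = (Fg ga) ((Equiv.sigmaCongrRight σb) p) := by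
        intro p
        have := congrArg (fun (e : Equiv.Perm (Fin n)) => e (e₀ p)) hab
        simpa [Φ] using this
      apply Equiv.ext
      intro p
      exact (Fg ga).injective (this p)
    funext k
    apply Equiv.ext
    intro i
    have := congrArg (fun (e : (Σ k : Fin t, Fin (c k)) ≃ _) => e ⟨k, i⟩) hσ
    simpa [Equiv.sigmaCongrRight] using this
  calc Fintype.card {g // P g} * ∏ i, (c i)!
      = Fintype.card ({g // P g} × Π k, Equiv.Perm (Fin (c k))) := by
        rw [Fintype.card_prod, Fintype.card_pi]
        congr 1
        refine Finset.prod_congr rfl fun i _ => ?_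
        rw [Fintype.card_perm, Fintype.card_fin]
    _ ≤ Fintype.card (Equiv.Perm (Fin n)) := Fintype.card_le_of_injective Φ hΦinj
    _ = n ! := by rw [Fintype.card_perm, Fintype.card_fin]

lemma aux_doubling (n t k : ℕ) (hn : 0 < n) (ht : 2 ≤ t) (hk : 1 ≤ k) :
    2 * (univ.filter fun g : Fin n → Fin t =>
        ∀ j, (univ.filter fun x => g x = j).card = k).card ≤ t ^ n := by
  classical
  obtain ⟨t', rfl⟩ : ∃ t', t = t' + 2 := ⟨t - 2, by omega⟩
  set b := univ.filter fun g : Fin n → Fin (t' + 2) =>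
      ∀ j, (univ.filter fun x => g x = j).card = k with hb
  set x0 : Fin n := ⟨0, hn⟩
  set f : (Fin n → Fin (t' + 2)) → (Fin n → Fin (t' + 2)) :=
    fun g => Function.update g x0 (g x0 + 1) with hf
  have hinj : Function.Injective f := by
    intro g g' h
    funext x
    by_cases hx : x = x0
    · subst hx
      have := congrFun h x0
      simp only [hf, Function.update_self] at this
      exact add_right_cancel this
    · have := congrFun h x
      simpa [hf, Function.update_of_ne hx] using this
  have hnotb : ∀ g ∈ b, f g ∉ b := by
    intro g hg hfg
    rw [hb, Finset.mem_filter] at hg hfg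
    have hgx : (univ.filter fun x => g x = g x0).card = k := hg.2 (g x0)
    have hfx : (univ.filter fun x => f g x = g x0).card = k := hfg.2 (g x0)
    have hne : g x0 + 1 ≠ g x0 := by
      intro h
      have : (1 : Fin (t' + 2)) = 0 := by
        have := congrArg (fun z => z - g x0) h
        simpa [add_sub_cancel_left, add_comm] using this
      simp at this
    have hset : (univ.filter fun x => f g x = g x0)
        = (univ.filter fun x => g x = g x0).erase x0 := by
      ext x
      by_cases hx : x = x0
      · subst hx
        simp [hf, Function.update_self, hne]
      · simp [hf, Function.update_of_ne hx, hx]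
    rw [hset, Finset.card_erase_of_mem (by simp)] at hfx
    omega
  have hdisj : Disjoint b (b.image f) := by
    rw [Finset.disjoint_right]
    intro g hg hgb
    obtain ⟨g', hg', rfl⟩ := Finset.mem_image.mp hg
    exact hnotb g' hg' hgb
  have hcard : (b.image f).card = b.card := Finset.card_image_of_injective b hinj
  have := Finset.card_union_of_disjoint hdisj
  have hle : (b ∪ b.image f).card ≤ (univ : Finset (Fin n → Fin (t' + 2))).card :=
    Finset.card_le_card (Finset.subset_univ _)
  rw [this, hcard] at hle
  simpa [Finset.card_univ, two_mul] using hle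

/-- With `c₂ = √(π/(2t³(4t)^(1/(t−1))))` and `d ≥ n/t − c₂√n` (with `t ∣ n`), the
functions `g : {1,...,n} → {1,...,t}` attaining every value at least `d` times make up
at most half of all `t^n` functions. -/
theorem stmt_18 (n t d : ℕ) (hn : 0 < n) (ht : 2 ≤ t) (hdvd : t ∣ n)
    (hd : (n : ℝ) / t -
        Real.sqrt (Real.pi / (2 * (t : ℝ) ^ 3 * (4 * (t : ℝ)) ^ (1 / ((t : ℝ) - 1))))
          * Real.sqrt n ≤ (d : ℝ)) :
    (Nat.card {g : Fin n → Fin t //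
        ∀ k : Fin t, d ≤ (Finset.univ.filter fun x => g x = k).card} : ℝ) ≤
      (t : ℝ) ^ n / 2 := by
  classical
  obtain ⟨t', rfl⟩ : ∃ t', t = t' + 2 := ⟨t - 2, by omega⟩
  obtain ⟨q, hq⟩ := hdvd
  have hq1 : 1 ≤ q := by
    rcases Nat.eq_zero_or_pos q with h | h
    · subst h; rw [Nat.mul_zero] at hq; omega
    · exact h
  set T : ℕ := t' + 2 with hTs
  -- the c₂ constant
  set c₂ : ℝ := Real.sqrt (π / (2 * ((T:ℕ):ℝ) ^ 3 * (4 * ((T:ℕ):ℝ)) ^ (1 / (((T:ℕ):ℝ) - 1))))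
    with hc₂s
  have hc₂0 : 0 ≤ c₂ := Real.sqrt_nonneg _
  rw [Nat.card_eq_fintype_card, Fintype.card_subtype]
  set Pd : (Fin n → Fin T) → Prop :=
    fun g => ∀ k : Fin T, d ≤ (Finset.univ.filter fun x => g x = k).card with hPds
  have hfib : ∀ g : Fin n → Fin T, ∑ j : Fin T, (univ.filter fun x => g x = j).card = n := by
    intro g
    have := Finset.card_eq_sum_card_fiberwise
      (f := g) (s := univ) (t := univ) (fun x _ => Finset.mem_univ _)
    simpa [Finset.card_univ] using this.symm
  have hTpos : (0:ℝ) < ((T:ℕ):ℝ) := by positivity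
  by_cases hcase : n < T * d
  · -- empty
    have hempty : (univ.filter Pd) = ∅ := by
      rw [Finset.filter_eq_empty_iff]
      intro g _
      intro hgPd
      have h1 := hfib g
      have h2 : (univ : Finset (Fin T)).card • d ≤ ∑ j : Fin T, (univ.filter fun x => g x = j).card :=
        Finset.card_nsmul_le_sum _ _ _ (fun j _ => hgPd j)
      simp only [Finset.card_univ, Fintype.card_fin, smul_eq_mul, h1] at h2
      omega
    rw [hempty]
    simp only [Finset.card_empty, Nat.cast_zero]
    positivity
  · push_neg at hcase  -- T * d ≤ n
    by_cases hbig : 1 ≤ ((T:ℕ):ℝ) * c₂ * Real.sqrt n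
    · -- main case
      set w : ℕ := n - T * d with hws
      set M : ℕ := Nat.multinomial univ (fun _ : Fin T => q) with hMs
      have hMq : (q ! : ℕ) ^ T * M = n ! := by
        have h := Nat.multinomial_spec (univ : Finset (Fin T)) (fun _ => q)
        simp only [Finset.prod_const, Finset.sum_const, Finset.card_univ, Fintype.card_fin,
          smul_eq_mul] at h
        rw [← hq] at h
        exact h
      -- counting bound
      set prof : (Fin n → Fin T) → (Fin T → ℕ) :=
        fun g j => (univ.filter fun x => g x = j).card with hprofs
      have hqfact : 0 < (q !) ^ T := by positivity
      have hperfiber : ∀ c ∈ (univ.filter Pd).image prof,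
          ((univ.filter Pd).filter fun g => prof g = c).card ≤ M := by
        intro c hcmem
        obtain ⟨g₀, hg₀, rfl⟩ := Finset.mem_image.mp hcmem
        have hsum : ∑ i, prof g₀ i = n := hfib g₀
        have hsubc : ((univ.filter Pd).filter fun g => prof g = prof g₀) ⊆
            univ.filter (fun g : Fin n → Fin T =>
              ∀ j, (univ.filter fun x => g x = j).card = prof g₀ j) := by
          intro g hg
          rw [Finset.mem_filter] at hg ⊢
          exact ⟨Finset.mem_univ _, fun j => congrFun hg.2 j⟩
        have h1 := Finset.card_le_card hsubc
        have h2 := aux_class_card n T (prof g₀) hsum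
        have h3 : ((q ! : ℝ)) ^ T ≤ ∏ i, (((prof g₀ i)!  : ℕ) : ℝ) :=
          aux_jensen (t := T) (k := q) (Nat.succ_ne_zero (t'+1)) (prof g₀) (by rw [hsum, hq])
        have hj : (q !) ^ T ≤ ∏ i, (prof g₀ i)! := by
          have := h3
          push_cast at this
          exact_mod_cast this
        set CC := (univ.filter (fun g : Fin n → Fin T =>
              ∀ j, (univ.filter fun x => g x = j).card = prof g₀ j)).card with hCCs
        have h4 : CC * (q !) ^ T ≤ (q !) ^ T * M := by
          calc CC * (q !) ^ T ≤ CC * ∏ i, (prof g₀ i)! := Nat.mul_le_mul_left CC hj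
            _ ≤ n ! := h2
            _ = (q !) ^ T * M := hMq.symm
        have h5 : CC ≤ M := by
          have h6 : (q !) ^ T * CC ≤ (q !) ^ T * M := by
            rw [Nat.mul_comm ((q !) ^ T) CC]; exact h4
          exact Nat.le_of_mul_le_mul_left h6 hqfact
        exact le_trans h1 h5
      have himage : ((univ.filter Pd).image prof).card ≤ (w+1)^(t'+1) := by
        have hub : ∀ c ∈ (univ.filter Pd).image prof, ∀ j : Fin T, d ≤ c j ∧ c j ≤ d + w := by
          intro c hcmem j
          obtain ⟨g₀, hg₀, rfl⟩ := Finset.mem_image.mp hcmem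
          have hPd : Pd g₀ := (Finset.mem_filter.mp hg₀).2
          constructor
          · exact hPd j
          · have h2 : ∑ i ∈ (univ : Finset (Fin T)).erase j, prof g₀ i + prof g₀ j = n := by
              rw [Finset.sum_erase_add _ _ (Finset.mem_univ j)]
              exact hfib g₀
            have h3 : ((univ : Finset (Fin T)).erase j).card • d ≤
                ∑ i ∈ (univ : Finset (Fin T)).erase j, prof g₀ i :=
              Finset.card_nsmul_le_sum _ _ _ (fun i _ => hPd i)
            have h4 : ((univ : Finset (Fin T)).erase j).card = T - 1 := by
              rw [Finset.card_erase_of_mem (Finset.mem_univ j), Finset.card_univ,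
                Fintype.card_fin]
            rw [h4, smul_eq_mul] at h3
            have h6 : (T - 1) * d + d = T * d := by
              have h7 : T - 1 + 1 = T := by omega
              calc (T - 1) * d + d = (T - 1 + 1) * d := by rw [Nat.succ_mul]
                _ = T * d := by rw [h7]
            have hwn : T * d + w = n := by omega
            omega
        have hB := Finset.card_le_card_of_injOn
          (f := fun (c : Fin T → ℕ) (i : Fin (t'+1)) => c i.castSucc)
          (t := Fintype.piFinset fun _ : Fin (t'+1) => Finset.Icc d (d+w))
          (fun c hcmem => by
            rw [Finset.mem_coe, Fintype.mem_piFinset]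
            intro i
            rw [Finset.mem_Icc]
            exact hub c hcmem i.castSucc)
          (by
            intro c hcmem c' hcmem' hres
            have hsum : ∑ i, c i = n := by
              obtain ⟨g₀, hg₀, rfl⟩ := Finset.mem_image.mp hcmem
              exact hfib g₀
            have hsum' : ∑ i, c' i = n := by
              obtain ⟨g₀, hg₀, rfl⟩ := Finset.mem_image.mp hcmem'
              exact hfib g₀
            have hcs : ∀ i : Fin (t'+1), c i.castSucc = c' i.castSucc := fun i =>
              congrFun hres i
            have h8 : ∑ i : Fin (t'+1), c i.castSucc = ∑ i : Fin (t'+1), c' i.castSucc :=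
              Finset.sum_congr rfl (fun i _ => hcs i)
            have h9 : ∑ i : Fin (t'+1), c i.castSucc + c (Fin.last (t'+1)) = n := by
              rw [← Fin.sum_univ_castSucc]; exact hsum
            have h10 : ∑ i : Fin (t'+1), c' i.castSucc + c' (Fin.last (t'+1)) = n := by
              rw [← Fin.sum_univ_castSucc]; exact hsum'
            funext j
            refine Fin.lastCases ?_ ?_ j
            · omega
            · exact fun i => hcs i)
        calc ((univ.filter Pd).image prof).card
            ≤ (Fintype.piFinset fun _ : Fin (t'+1) => Finset.Icc d (d+w)).card := hB
          _ = (w+1)^(t'+1) := by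
              rw [Fintype.card_piFinset]
              simp only [Nat.card_Icc]
              rw [Finset.prod_const, Finset.card_univ, Fintype.card_fin]
              congr 1
              omega
      have hcount : (univ.filter Pd).card ≤ M * (w+1)^(t'+1) :=
        le_trans (Finset.card_le_mul_card_image (univ.filter Pd) M hperfiber)
          (Nat.mul_le_mul_left M himage)
      -- now the real-number bound
      have hwreal : ((w:ℕ):ℝ) ≤ ((T:ℕ):ℝ) * c₂ * Real.sqrt n := by
        have hcast : ((w:ℕ):ℝ) = ((n:ℕ):ℝ) - ((T*d:ℕ):ℝ) := by
          rw [hws, Nat.cast_sub hcase]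
        have hmul := mul_le_mul_of_nonneg_left hd hTpos.le
        have hTne : ((T:ℕ):ℝ) ≠ 0 := ne_of_gt hTpos
        have hexp : ((T:ℕ):ℝ) * (((n:ℕ):ℝ) / ((T:ℕ):ℝ) - c₂ * Real.sqrt n)
            = ((n:ℕ):ℝ) - ((T:ℕ):ℝ) * (c₂ * Real.sqrt n) := by
          field_simp
        rw [hexp] at hmul
        have : ((T*d:ℕ):ℝ) = ((T:ℕ):ℝ) * (d:ℝ) := by push_cast; ring
        rw [hcast, this]
        nlinarith [hmul]
      have hu2 : ((w+1:ℕ):ℝ) ≤ 2 * ((T:ℕ):ℝ) * c₂ * Real.sqrt (((T * q : ℕ)):ℝ) := by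
        have hnq : (((T * q : ℕ)):ℝ) = ((n:ℕ):ℝ) := by rw [← hq]
        rw [hnq, Nat.cast_add, Nat.cast_one]
        have h1 : ((T:ℕ):ℝ) * c₂ * Real.sqrt n + ((T:ℕ):ℝ) * c₂ * Real.sqrt n
            = 2 * ((T:ℕ):ℝ) * c₂ * Real.sqrt n := by ring
        linarith [hbig, hwreal]
      have hfinal := aux_analytic t' q hq1 (((w+1:ℕ)):ℝ) (by positivity) hu2
      calc (((univ.filter Pd).card :ℕ) : ℝ)
          ≤ ((M * (w+1)^(t'+1) : ℕ) : ℝ) := by exact_mod_cast hcount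
        _ = ((w+1:ℕ):ℝ)^(t'+1) * (M:ℝ) := by push_cast; ring
        _ ≤ ((T:ℕ):ℝ) ^ (T * q) / 2 := hfinal
        _ = ((T:ℕ):ℝ) ^ n / 2 := by rw [← hq]
    · -- small case
      push_neg at hbig
      have hc2small : c₂ * Real.sqrt n < 1 := by
        have h1 : (1:ℝ) ≤ ((T:ℕ):ℝ) := by
          have : (1:ℕ) ≤ T := by omega
          exact_mod_cast this
        nlinarith [Real.sqrt_nonneg (n:ℝ), hc₂0]
      have hdq : q ≤ d := by
        have h1 : ((n:ℕ):ℝ) / ((T:ℕ):ℝ) = ((q:ℕ):ℝ) := by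
          rw [hq]; push_cast; field_simp
        have h2 : ((q:ℕ):ℝ) - 1 < (d:ℝ) := by
          rw [← h1]
          have := hd
          push_cast at this ⊢
          nlinarith [this, hc2small]
        have : ((q:ℕ):ℝ) < (d:ℝ) + 1 := by linarith
        exact_mod_cast Nat.lt_succ_iff.mp (by exact_mod_cast this)
      -- all fibers equal q
      have hsub : (univ.filter Pd) ⊆ (univ.filter fun g : Fin n → Fin T =>
          ∀ j, (univ.filter fun x => g x = j).card = q) := by
        intro g hg
        rw [Finset.mem_filter] at hg ⊢
        refine ⟨hg.1, ?_⟩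
        have hge : ∀ j, q ≤ (univ.filter fun x => g x = j).card :=
          fun j => le_trans hdq (hg.2 j)
        intro j
        have hle : (univ.filter fun x => g x = j).card ≤ q := by
          have h2 : ∑ i ∈ (univ : Finset (Fin T)).erase j,
              (univ.filter fun x => g x = i).card + (univ.filter fun x => g x = j).card
              = n := by
            rw [Finset.sum_erase_add _ _ (Finset.mem_univ j)]
            exact hfib g
          have h3 : ((univ : Finset (Fin T)).erase j).card • q ≤
              ∑ i ∈ (univ : Finset (Fin T)).erase j, (univ.filter fun x => g x = i).card :=
            Finset.card_nsmul_le_sum _ _ _ (fun i _ => hge i)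
          have h4 : ((univ : Finset (Fin T)).erase j).card = T - 1 := by
            rw [Finset.card_erase_of_mem (Finset.mem_univ j), Finset.card_univ, Fintype.card_fin]
          rw [h4, smul_eq_mul] at h3
          have hqn : n = T * q := hq
          have h6 : (T - 1) * q + q = T * q := by
            have h7 : T - 1 + 1 = T := by omega
            calc (T - 1) * q + q = (T - 1 + 1) * q := by rw [Nat.succ_mul]
              _ = T * q := by rw [h7]
          omega
        exact le_antisymm hle (hge j)
      have hbal := aux_doubling n T q hn (by omega) hq1
      have hcard := Finset.card_le_card hsub
      have : 2 * (univ.filter Pd).card ≤ T ^ n := le_trans (Nat.mul_le_mul_left 2 hcard) hbal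
      rw [le_div_iff₀ (by norm_num : (0:ℝ) < 2)]
      calc ((univ.filter Pd).card : ℝ) * 2 = ((2 * (univ.filter Pd).card : ℕ) : ℝ) := by
            push_cast; ring
        _ ≤ ((T ^ n : ℕ) : ℝ) := by exact_mod_cast this
        _ = ((T:ℕ):ℝ) ^ n := by push_cast; ring
end
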